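/- There exists a finite simple graph G and a vertex v of G with deg_G(v) ≥ 1 such that γst(G − v) = γst(G) − deg_G(v); that is, the lower bound γst(G) − deg_G(v) ≤ γst(G − v) is tight. -/

import Mathlib

/-! The witness is the path `P₄ = 0 - 1 - 2 - 3` with `v = 3`, so `deg v = 1`. Each leaf of a
graph forces itself or its unique neighbour into every strong dominating set, so the two leaves
of `P₄` give `γst(P₄) ≥ 2`, attained by `{1, 2}`. Deleting `3` leaves `P₃`, strongly dominated by
its centre, so `γst(P₄ - 3) = 1 = γst(P₄) - deg 3`. -/

/-- The degree of a vertex `x` in a graph `G`. -/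
noncomputable def sdeg {V : Type*} (G : SimpleGraph V) (x : V) : ℕ :=
  (G.neighborSet x).ncard

/-- `D` is a strong dominating set of `G`: every vertex `x ∉ D` has a neighbor
`y ∈ D` with `deg x ≤ deg y`. -/
def IsStrongDominating {V : Type*} (G : SimpleGraph V) (D : Set V) : Prop :=
  ∀ x ∉ D, ∃ y ∈ D, G.Adj x y ∧ sdeg G x ≤ sdeg G y

/-- The strong domination number of `G`. -/
noncomputable def sdn {V : Type*} (G : SimpleGraph V) : ℕ :=
  sInf {n | ∃ D : Set V, IsStrongDominating G D ∧ D.ncard = n}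

/-- Vertex deletion `G - v`: the induced subgraph on the complement of `{v}`. -/
def delVtx {V : Type*} (G : SimpleGraph V) (v : V) : SimpleGraph {x : V // x ≠ v} where
  Adj a b := G.Adj a.1 b.1
  symm := ⟨fun a b h => G.adj_symm h⟩
  loopless := ⟨fun a h => G.irrefl h⟩

/-- Vertex contraction `G / v`: delete `v` and put a clique on its open neighborhood. -/
def contractVtx {V : Type*} (G : SimpleGraph V) (v : V) : SimpleGraph {x : V // x ≠ v} where
  Adj a b := a ≠ b ∧ (G.Adj a.1 b.1 ∨ (G.Adj v a.1 ∧ G.Adj v b.1))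
  symm := by
    constructor
    rintro a b ⟨hab, h | ⟨ha, hb⟩⟩
    · exact ⟨hab.symm, Or.inl h.symm⟩
    · exact ⟨hab.symm, Or.inr ⟨hb, ha⟩⟩
  loopless := by constructor; rintro a ⟨h, -⟩; exact h rfl

/-- `G ⊙ v`: remove all edges between any pair of neighbors of `v`. -/
def odotVtx {V : Type*} (G : SimpleGraph V) (v : V) : SimpleGraph V where
  Adj x y := G.Adj x y ∧ ¬(G.Adj v x ∧ G.Adj v y)
  symm := by
    constructor
    rintro x y ⟨h, hn⟩
    exact ⟨h.symm, fun hc => hn ⟨hc.2, hc.1⟩⟩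
  loopless := by constructor; rintro x ⟨h, -⟩; exact G.irrefl h

/-- Edge contraction `G / uv`: merge `v` into `u`. -/
def contractEdge {V : Type*} (G : SimpleGraph V) (u v : V) : SimpleGraph {x : V // x ≠ v} where
  Adj a b := a ≠ b ∧ (G.Adj a.1 b.1 ∨ (a.1 = u ∧ G.Adj v b.1) ∨ (b.1 = u ∧ G.Adj v a.1))
  symm := by
    constructor
    rintro a b ⟨hab, h | h | h⟩
    · exact ⟨hab.symm, Or.inl h.symm⟩
    · exact ⟨hab.symm, Or.inr (Or.inr h)⟩
    · exact ⟨hab.symm, Or.inr (Or.inl h)⟩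
  loopless := by constructor; rintro a ⟨h, -⟩; exact h rfl

/-- The star `K_{1,n}` with center `none` and leaves `some i`. -/
def starG (n : ℕ) : SimpleGraph (Option (Fin n)) where
  Adj a b := (a = none ∧ b ≠ none) ∨ (a ≠ none ∧ b = none)
  symm := by
    constructor
    rintro a b (⟨h1, h2⟩ | ⟨h1, h2⟩)
    · exact Or.inr ⟨h2, h1⟩
    · exact Or.inl ⟨h2, h1⟩
  loopless := by
    constructor
    rintro a (⟨h1, h2⟩ | ⟨h1, h2⟩)
    exacts [h2 h1, h1 h2]

/-- The path graph `P_n` on vertices `0, …, n-1`, consecutive integers adjacent. -/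
def pathG (n : ℕ) : SimpleGraph (Fin n) where
  Adj i j := i.1 + 1 = j.1 ∨ j.1 + 1 = i.1
  symm := ⟨fun i j h => h.symm⟩
  loopless := by constructor; rintro i (h | h) <;> omega

section StrongDomination

variable {V : Type*} (G : SimpleGraph V)

theorem sdeg_eq_degree [Fintype V] [DecidableRel G.Adj] (x : V) : sdeg G x = G.degree x := by
  rw [sdeg, ← G.card_neighborSet_eq_degree, Set.ncard_eq_toFinset_card', Set.toFinset_card]

theorem isStrongDominating_coe_iff [Fintype V] [DecidableRel G.Adj] (D : Finset V) :
    IsStrongDominating G D ↔ ∀ x ∉ D, ∃ y ∈ D, G.Adj x y ∧ G.degree x ≤ G.degree y := by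
  simp only [IsStrongDominating, Finset.mem_coe, sdeg_eq_degree]

theorem isStrongDominating_univ : IsStrongDominating G Set.univ :=
  fun _ hx => absurd (Set.mem_univ _) hx

variable {G}

theorem sdn_le_ncard {D : Set V} (hD : IsStrongDominating G D) : sdn G ≤ D.ncard :=
  Nat.sInf_le ⟨D, hD, rfl⟩

theorem le_sdn {n : ℕ} (h : ∀ D, IsStrongDominating G D → n ≤ D.ncard) : n ≤ sdn G :=
  le_csInf ⟨_, _, isStrongDominating_univ G, rfl⟩ fun _ ⟨D, hD, hn⟩ => hn ▸ h D hD

theorem IsStrongDominating.nonempty [Nonempty V] {D : Set V} (hD : IsStrongDominating G D) :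
    D.Nonempty := by
  obtain x := Classical.arbitrary V
  by_cases hx : x ∈ D
  · exact ⟨x, hx⟩
  · obtain ⟨y, hy, -⟩ := hD x hx
    exact ⟨y, hy⟩

theorem IsStrongDominating.mem_or_mem_of_neighborSet_eq {D : Set V} (hD : IsStrongDominating G D)
    {x y : V} (hx : G.neighborSet x = {y}) : x ∈ D ∨ y ∈ D := by
  refine or_iff_not_imp_left.2 fun hxD => ?_
  obtain ⟨z, hz, hxz, -⟩ := hD x hxD
  rwa [show z = y from (Set.ext_iff.1 hx z).1 hxz] at hz

end StrongDomination

instance (n : ℕ) : DecidableRel (pathG n).Adj := fun _ _ => inferInstanceAs (Decidable (_ ∨ _))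

instance {V : Type*} (G : SimpleGraph V) [DecidableRel G.Adj] (v : V) :
    DecidableRel (delVtx G v).Adj := fun a b => inferInstanceAs (Decidable (G.Adj a.1 b.1))

theorem sdeg_pathG_four_three : sdeg (pathG 4) 3 = 1 := by
  rw [sdeg_eq_degree]; decide

theorem sdn_pathG_four : sdn (pathG 4) = 2 := by
  refine le_antisymm ?_ (le_sdn fun D hD => ?_)
  · have hD : IsStrongDominating (pathG 4) ↑({1, 2} : Finset (Fin 4)) := by
      rw [isStrongDominating_coe_iff]; decide
    simpa using sdn_le_ncard hD
  · have h01 := hD.mem_or_mem_of_neighborSet_eq (x := 0) (y := 1) (by ext y; simp [pathG]; omega)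
    have h32 := hD.mem_or_mem_of_neighborSet_eq (x := 3) (y := 2) (by ext y; simp [pathG]; omega)
    show 1 < D.ncard
    rw [Set.one_lt_ncard_iff D.toFinite]
    rcases h01 with h | h <;> rcases h32 with h' | h' <;> exact ⟨_, _, h, h', by decide⟩

theorem sdn_delVtx_pathG_four_three : sdn (delVtx (pathG 4) 3) = 1 := by
  have : Nonempty {x : Fin 4 // x ≠ 3} := ⟨⟨0, by decide⟩⟩
  refine le_antisymm ?_ (le_sdn fun D hD => (Set.ncard_pos D.toFinite).2 hD.nonempty)
  have hD : IsStrongDominating (delVtx (pathG 4) 3)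
      ↑({⟨1, by decide⟩} : Finset {x : Fin 4 // x ≠ 3}) := by
    rw [isStrongDominating_coe_iff]; decide
  simpa using sdn_le_ncard hD

/-- the lower bound γst(G) − deg_G(v) ≤ γst(G − v) is tight. -/
theorem sdn_delVtx_lower_bound_tight :
    ∃ (n : ℕ) (G : SimpleGraph (Fin n)) (v : Fin n),
      1 ≤ sdeg G v ∧ (sdn (delVtx G v) : ℤ) = (sdn G : ℤ) - (sdeg G v : ℤ) := by
  refine ⟨4, pathG 4, 3, ?_, ?_⟩
  · rw [sdeg_pathG_four_three]
  · rw [sdn_delVtx_pathG_four_three, sdn_pathG_four, sdeg_pathG_four_three]; norm_num
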